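/- Let Φ ∈ ℝ^{np×n} be (n-stacked) q-error correctable, x ∈ ℝⁿ, e ∈ Σ_qⁿ, v ∈ ℝ^{np} with ‖v_i‖₂ ≤ v_max for all blocks i, ẑ = Φx + e + v, and fix an integer r with q ≤ r ≤ 2q and v'_max := ϑ_{p,q,r}(Φ)·v_max. If a vector x̂ ∈ ℝⁿ satisfies |{i ∈ {1,…,p} : ‖ẑ_i − Φ_{Γᵢⁿ}x̂‖₂ > v'_max}| ≤ q, then ‖x̂ − x‖₂ ≤ κ^c_{p,q,r}(Φ)·v_max, where κ^c_{p,q,r}(Φ) := (ϑ_{p,q,r}(Φ) + 1)√(p−2q)/ρ_{p,2q}(Φ). -/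

import Mathlib

open scoped Classical
open Finset Matrix

noncomputable section

namespace SecureEst

variable {n p : ℕ}

/-- The `i`-th `n`-block of an `n`-stacked vector. -/
def blk (z : Fin p × Fin n → ℝ) (i : Fin p) : Fin n → ℝ := fun j => z (i, j)

/-- The `n`-stacked support of a stacked vector. -/
def blockSupp (z : Fin p × Fin n → ℝ) : Finset (Fin p) :=
  Finset.univ.filter fun i => blk z i ≠ 0

/-- The `n`-stacked ℓ⁰ "norm": number of nonzero blocks. -/
def l0n (z : Fin p × Fin n → ℝ) : ℕ := (blockSupp z).card

/-- `n`-stacked `q`-sparsity: membership in `Σ_qⁿ`. -/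
def Sparse (q : ℕ) (z : Fin p × Fin n → ℝ) : Prop := l0n z ≤ q

/-- Euclidean (ℓ²) norm of a real vector. -/
def eNorm2 {m : Type*} [Fintype m] (x : m → ℝ) : ℝ := Real.sqrt (∑ i, x i ^ 2)

/-- `Φ_{Λⁿ}`: zero out the row-blocks of `Φ` outside `Λ`. -/
def zeroB (Λ : Finset (Fin p)) (Φ : Matrix (Fin p × Fin n) (Fin n) ℝ) :
    Matrix (Fin p × Fin n) (Fin n) ℝ :=
  fun ij k => if ij.1 ∈ Λ then Φ ij k else 0

/-- `z_{Λⁿ}`: zero out the blocks of a stacked vector outside `Λ`. -/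
def zeroV (Λ : Finset (Fin p)) (z : Fin p × Fin n → ℝ) : Fin p × Fin n → ℝ :=
  fun ij => if ij.1 ∈ Λ then z ij else 0

/-- `Φ_{Γᵢⁿ}`: the `i`-th row-block of `Φ`. -/
def rowBlk (Φ : Matrix (Fin p × Fin n) (Fin n) ℝ) (i : Fin p) :
    Matrix (Fin n) (Fin n) ℝ := fun j k => Φ (i, j) k

/-- Moore–Penrose pseudoinverse (full-column-rank formula `(MᵀM)⁻¹Mᵀ`). -/
def pinv {m k : Type*} [Fintype m] [Fintype k] [DecidableEq k]
    (M : Matrix m k ℝ) : Matrix k m ℝ := (Mᵀ * M)⁻¹ * Mᵀ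

/-- Spectral norm (largest singular value) of a real matrix. -/
def specNorm {m k : Type*} [Fintype m] [Fintype k] (M : Matrix m k ℝ) : ℝ :=
  sSup {r | ∃ x : k → ℝ, eNorm2 x = 1 ∧ r = eNorm2 (M.mulVec x)}

/-- Minimum singular value of a (tall) real matrix. -/
def sigmaMin {m k : Type*} [Fintype m] [Fintype k] (M : Matrix m k ℝ) : ℝ :=
  sInf {r | ∃ x : k → ℝ, eNorm2 x = 1 ∧ r = eNorm2 (M.mulVec x)}

/-- `(n-stacked) q`-error detectability. -/
def ErrDetectable (Φ : Matrix (Fin p × Fin n) (Fin n) ℝ) (q : ℕ) : Prop :=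
  ∀ x x' : Fin n → ℝ, ∀ e : Fin p × Fin n → ℝ,
    Sparse q e → Φ.mulVec x + e = Φ.mulVec x' → x = x'

/-- `(n-stacked) q`-error correctability. -/
def ErrCorrectable (Φ : Matrix (Fin p × Fin n) (Fin n) ℝ) (q : ℕ) : Prop :=
  ∀ x₁ x₂ : Fin n → ℝ, ∀ e₁ e₂ : Fin p × Fin n → ℝ,
    Sparse q e₁ → Sparse q e₂ →
      Φ.mulVec x₁ + e₁ = Φ.mulVec x₂ + e₂ → x₁ = x₂

/-- `(n-stacked)` cospark. -/
def cosparkN (Φ : Matrix (Fin p × Fin n) (Fin n) ℝ) : ℕ :=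
  sInf {m : ℕ | ∃ x : Fin n → ℝ, x ≠ 0 ∧ m = l0n (Φ.mulVec x)}

/-- `ρ_{p,q}(Φ)`. -/
def rho (Φ : Matrix (Fin p × Fin n) (Fin n) ℝ) (q : ℕ) : ℝ :=
  sInf {r | ∃ Λ : Finset (Fin p), Λ.card = p - q ∧ r = sigmaMin (zeroB Λ Φ)}

/-- `η_{p,q}(Φ)`. -/
def eta (Φ : Matrix (Fin p × Fin n) (Fin n) ℝ) (q : ℕ) : ℝ :=
  sSup {r | ∃ Λ : Finset (Fin p), Λ.card = p - q ∧
    ∃ i : Fin p, i ∉ Λ ∧ r = specNorm (rowBlk Φ i * pinv (zeroB Λ Φ))}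

/-- `κ^d_{p,q}(Φ)`. -/
def kappaD (Φ : Matrix (Fin p × Fin n) (Fin n) ℝ) (q : ℕ) : ℝ :=
  (Real.sqrt (p : ℝ) + 1) * Real.sqrt ((p - q : ℕ) : ℝ) / rho Φ q

/-- `κ^e_{p,q}(Φ)`. -/
def kappaE (Φ : Matrix (Fin p × Fin n) (Fin n) ℝ) (q : ℕ) : ℝ :=
  (eta Φ q * Real.sqrt ((p - q : ℕ) : ℝ) + 1) * (Real.sqrt (p : ℝ) + 1)

/-- The finite candidate set `F_{p,r}(ẑ)`. -/
def Fset (Φ : Matrix (Fin p × Fin n) (Fin n) ℝ) (r : ℕ) (z : Fin p × Fin n → ℝ) :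
    Set (Fin n → ℝ) :=
  {χ | ∃ Λ : Finset (Fin p), Λ.card = p - r ∧
    χ = (pinv (zeroB Λ Φ)).mulVec (zeroV Λ z)}

/-- `η'_{p,q,r}(Φ)`. -/
def eta' (Φ : Matrix (Fin p × Fin n) (Fin n) ℝ) (q r : ℕ) : ℝ :=
  sSup {a | ∃ Λ : Finset (Fin p), Λ.card = p - q ∧
    a = sInf {b | ∃ Λ' : Finset (Fin p), Λ' ⊆ Λ ∧ Λ'.card = p - r ∧
      b = sSup {c | ∃ i ∈ Λ \ Λ',
        c = specNorm (rowBlk Φ i * pinv (zeroB Λ' Φ))}}}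

/-- `ϑ_{p,q,r}(Φ)`. -/
def theta (Φ : Matrix (Fin p × Fin n) (Fin n) ℝ) (q r : ℕ) : ℝ :=
  max (eta' Φ q r * Real.sqrt ((p - r : ℕ) : ℝ) + 1) (Real.sqrt ((p - r : ℕ) : ℝ))

/-- `κ^c_{p,q,r}(Φ)`. -/
def kappaC (Φ : Matrix (Fin p × Fin n) (Fin n) ℝ) (q r : ℕ) : ℝ :=
  (theta Φ q r + 1) * Real.sqrt ((p - 2 * q : ℕ) : ℝ) / rho Φ (2 * q)

/-- `κ^{c'}_{p,q,r}(Φ)`. -/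
def kappaC' (Φ : Matrix (Fin p × Fin n) (Fin n) ℝ) (q r : ℕ) : ℝ :=
  (theta Φ q r - 1) / sSup {c | ∃ i : Fin p, c = specNorm (rowBlk Φ i)}

/-- Stacked observability matrix `G` with row-blocks `Gᵢ = [cᵢᵀ (cᵢA)ᵀ ⋯ (cᵢAⁿ⁻¹)ᵀ]ᵀ`. -/
def obsG (A : Matrix (Fin n) (Fin n) ℝ) (C : Matrix (Fin p) (Fin n) ℝ) :
    Matrix (Fin p × Fin n) (Fin n) ℝ :=
  fun ij k => (C * A ^ (ij.2 : ℕ)) ij.1 k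

/-- `C_Λ`: zero out the rows of `C` outside `Λ`. -/
def zeroRows (Λ : Finset (Fin p)) (C : Matrix (Fin p) (Fin n) ℝ) :
    Matrix (Fin p) (Fin n) ℝ :=
  fun i k => if i ∈ Λ then C i k else 0

/-- Observability of the pair `(A, C)`: the observability matrix has full column rank. -/
def Observable (A : Matrix (Fin n) (Fin n) ℝ) (C : Matrix (Fin p) (Fin n) ℝ) : Prop :=
  (obsG A C).rank = n

/-- `q`-redundant observability. -/
def RedObservable (A : Matrix (Fin n) (Fin n) ℝ) (C : Matrix (Fin p) (Fin n) ℝ)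
    (q : ℕ) : Prop :=
  ∀ Λ : Finset (Fin p), p - q ≤ Λ.card → Observable A (zeroRows Λ C)

/-- Euclidean norm of a complex vector. -/
def enormC {m : Type*} [Fintype m] (v : m → ℂ) : ℝ :=
  Real.sqrt (∑ i, ‖v i‖ ^ 2)

/-- The set `V(A)` of normalized complex eigenvectors of a real matrix `A`. -/
def eigSet (A : Matrix (Fin n) (Fin n) ℝ) : Set (Fin n → ℂ) :=
  {v | (∃ μ : ℂ, (A.map Complex.ofReal).mulVec v = μ • v) ∧ enormC v = 1}

/-- ℓ⁰ norm of a complex vector. -/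
def l0C (y : Fin p → ℂ) : ℕ := (Finset.univ.filter fun i => y i ≠ 0).card

/-- `n`-stacked ℓ⁰ norm of a complex stacked vector. -/
def l0nC (z : Fin p × Fin n → ℂ) : ℕ :=
  (Finset.univ.filter fun i => (fun j => z (i, j)) ≠ (0 : Fin n → ℂ)).card

/-- The dynamic security index `α_d(A, C)`. -/
def alphaD (A : Matrix (Fin n) (Fin n) ℝ) (C : Matrix (Fin p) (Fin n) ℝ) : ℕ :=
  sInf {m : ℕ | ∃ v ∈ eigSet A, m = l0C ((C.map Complex.ofReal).mulVec v)}

end SecureEst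

/-!
On the at least `p - 2q` blocks that carry neither an attack (`eᵢ = 0`) nor a large residual,
`Φᵢ(x̂ - x) = vᵢ - (ẑᵢ - Φᵢx̂)`, so the triangle inequality gives `‖Φᵢ(x̂ - x)‖ ≤ (ϑ + 1) v_max`.
Stacking `p - 2q` of these blocks into `Λ` yields `ρ_{p,2q} ‖x̂ - x‖ ≤ σ_min(Φ_Λ) ‖x̂ - x‖ ≤
‖Φ_Λ(x̂ - x)‖ ≤ √(p - 2q) (ϑ + 1) v_max`. Finally `ρ_{p,2q} > 0`: if `Φ_Λ u = 0` then `Φu` lives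
on the `2q` blocks outside `Λ`, so it is a sum of two `q`-sparse vectors and error
correctability forces `u = 0`; an injective matrix is bounded below on the unit sphere.
-/

namespace SecureEst

section EuclideanNorm

variable {m k : Type*} [Fintype m] [Fintype k]

lemma eNorm2_eq_norm (x : m → ℝ) : eNorm2 x = ‖WithLp.toLp 2 x‖ := by
  simp [eNorm2, EuclideanSpace.norm_eq]

lemma eNorm2_nonneg (x : m → ℝ) : 0 ≤ eNorm2 x := Real.sqrt_nonneg _

lemma eNorm2_sq (x : m → ℝ) : eNorm2 x ^ 2 = ∑ i, x i ^ 2 :=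
  Real.sq_sqrt (Finset.sum_nonneg fun _ _ => sq_nonneg _)

lemma eNorm2_zero : eNorm2 (0 : m → ℝ) = 0 := by simp [eNorm2]

lemma eNorm2_pos {x : m → ℝ} (hx : x ≠ 0) : 0 < eNorm2 x := by
  rw [eNorm2_eq_norm]
  exact norm_pos_iff.mpr (by simpa using hx)

lemma eNorm2_sub_le (x y : m → ℝ) : eNorm2 (x - y) ≤ eNorm2 x + eNorm2 y := by
  simpa only [eNorm2_eq_norm, WithLp.toLp_sub] using
    norm_sub_le (WithLp.toLp 2 x) (WithLp.toLp 2 y)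

lemma eNorm2_smul (c : ℝ) (x : m → ℝ) : eNorm2 (c • x) = |c| * eNorm2 x := by
  simp only [eNorm2_eq_norm, WithLp.toLp_smul, norm_smul, Real.norm_eq_abs]

lemma eNorm2_single (i : k) : eNorm2 (Pi.single i (1 : ℝ)) = 1 := by
  simp [eNorm2, Pi.single_apply]

lemma sigmaMin_nonneg (M : Matrix m k ℝ) : 0 ≤ sigmaMin M :=
  Real.sInf_nonneg (by rintro r ⟨x, -, rfl⟩; exact eNorm2_nonneg _)

lemma sigmaMin_mul_eNorm2_le (M : Matrix m k ℝ) (w : k → ℝ) :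
    sigmaMin M * eNorm2 w ≤ eNorm2 (M *ᵥ w) := by
  rcases eq_or_ne w 0 with rfl | hw
  · simp [eNorm2_zero]
  have hpos := eNorm2_pos hw
  have hunit : eNorm2 ((eNorm2 w)⁻¹ • w) = 1 := by
    rw [eNorm2_smul, abs_of_pos (inv_pos.mpr hpos), inv_mul_cancel₀ hpos.ne']
  have hle : sigmaMin M ≤ eNorm2 (M *ᵥ ((eNorm2 w)⁻¹ • w)) :=
    csInf_le ⟨0, by rintro _ ⟨y, -, rfl⟩; exact eNorm2_nonneg _⟩ ⟨_, hunit, rfl⟩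
  rw [mulVec_smul, eNorm2_smul, abs_of_pos (inv_pos.mpr hpos), inv_mul_eq_div] at hle
  exact (le_div_iff₀ hpos).mp hle

lemma sigmaMin_pos [Nonempty k] {M : Matrix m k ℝ} (hM : Function.Injective M.mulVec) :
    0 < sigmaMin M := by
  obtain ⟨K, hK, hanti⟩ := (Matrix.toLpLin 2 2 M).injective_iff_antilipschitz.mp
    fun x y h => WithLp.ofLp_injective 2 (hM (congrArg (WithLp.ofLp) h))
  have hbound : ∀ x : k → ℝ, eNorm2 x = 1 → (K : ℝ)⁻¹ ≤ eNorm2 (M *ᵥ x) := by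
    intro x hx
    have h := hanti.le_mul_norm (map_zero _) (WithLp.toLp 2 x)
    rw [← eNorm2_eq_norm, hx, Matrix.toLpLin_toLp, ← eNorm2_eq_norm] at h
    exact (inv_le_iff_one_le_mul₀' (NNReal.coe_pos.mpr hK)).mpr (by simpa using h)
  obtain ⟨i⟩ := ‹Nonempty k›
  refine (inv_pos.mpr (NNReal.coe_pos.mpr hK)).trans_le
    (le_csInf ⟨_, _, eNorm2_single i, rfl⟩ ?_)
  rintro _ ⟨x, hx, rfl⟩
  exact hbound x hx

end EuclideanNorm

section Blocks

variable {n p : ℕ}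

lemma blk_add (z z' : Fin p × Fin n → ℝ) (i : Fin p) : blk (z + z') i = blk z i + blk z' i := rfl

lemma blk_mulVec (Φ : Matrix (Fin p × Fin n) (Fin n) ℝ) (y : Fin n → ℝ) (i : Fin p) :
    blk (Φ *ᵥ y) i = rowBlk Φ i *ᵥ y := rfl

lemma zeroB_mulVec (Λ : Finset (Fin p)) (Φ : Matrix (Fin p × Fin n) (Fin n) ℝ)
    (y : Fin n → ℝ) : zeroB Λ Φ *ᵥ y = zeroV Λ (Φ *ᵥ y) := by
  ext ij
  by_cases h : ij.1 ∈ Λ <;> simp [zeroB, zeroV, mulVec, dotProduct, h]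

lemma blk_zeroV (Λ : Finset (Fin p)) (z : Fin p × Fin n → ℝ) (i : Fin p) :
    blk (zeroV Λ z) i = if i ∈ Λ then blk z i else 0 := by
  ext j
  by_cases h : i ∈ Λ <;> simp [blk, zeroV, h]

lemma blockSupp_zeroV (Λ : Finset (Fin p)) (z : Fin p × Fin n → ℝ) :
    blockSupp (zeroV Λ z) = Λ ∩ blockSupp z := by
  ext i
  by_cases h : i ∈ Λ <;> simp [blockSupp, blk_zeroV, h]

lemma blockSupp_neg (z : Fin p × Fin n → ℝ) : blockSupp (-z) = blockSupp z := by
  ext i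
  simp [blockSupp, show blk (-z) i = -blk z i from rfl]

lemma zeroV_add_zeroV_compl (Λ : Finset (Fin p)) (z : Fin p × Fin n → ℝ) :
    zeroV Λ z + zeroV Λᶜ z = z := by
  ext ij
  by_cases h : ij.1 ∈ Λ <;> simp [zeroV, h]

lemma eNorm2_zeroV_sq (Λ : Finset (Fin p)) (z : Fin p × Fin n → ℝ) :
    eNorm2 (zeroV Λ z) ^ 2 = ∑ i ∈ Λ, eNorm2 (blk z i) ^ 2 := by
  rw [eNorm2_sq, Fintype.sum_prod_type,
    ← Finset.sum_subset (Finset.subset_univ Λ) fun i _ hi => by simp [zeroV, hi]]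
  exact Finset.sum_congr rfl fun i hi => by simp [eNorm2_sq, blk, zeroV, hi]

lemma eNorm2_zeroV_le {Λ : Finset (Fin p)} {z : Fin p × Fin n → ℝ} {B : ℝ}
    (hB : ∀ i ∈ Λ, eNorm2 (blk z i) ≤ B) : eNorm2 (zeroV Λ z) ≤ √(Λ.card : ℝ) * B := by
  rcases Λ.eq_empty_or_nonempty with rfl | ⟨i, hi⟩
  · simp [zeroV, eNorm2]
  have hB0 : 0 ≤ B := (eNorm2_nonneg _).trans (hB i hi)
  refine le_of_pow_le_pow_left₀ two_ne_zero (by positivity) ?_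
  calc eNorm2 (zeroV Λ z) ^ 2 = ∑ i ∈ Λ, eNorm2 (blk z i) ^ 2 := eNorm2_zeroV_sq Λ z
    _ ≤ ∑ _i ∈ Λ, B ^ 2 :=
      Finset.sum_le_sum fun i hi => pow_le_pow_left₀ (eNorm2_nonneg _) (hB i hi) 2
    _ = (√(Λ.card : ℝ) * B) ^ 2 := by simp [mul_pow]

lemma exists_card_eq_disjoint {α : Type*} [Fintype α] (U : Finset α) {m : ℕ} (hU : U.card ≤ m) :
    ∃ Λ : Finset α, Λ.card = Fintype.card α - m ∧ Disjoint Λ U := by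
  obtain ⟨Λ, hΛU, hΛ⟩ := Finset.exists_subset_card_eq (s := Uᶜ) (n := Fintype.card α - m)
    (by rw [Finset.card_compl]; omega)
  exact ⟨Λ, hΛ, Finset.subset_compl_iff_disjoint_right.mp hΛU⟩

lemma exists_sparse_add_eq {q : ℕ} {z : Fin p × Fin n → ℝ} (hz : l0n z ≤ 2 * q) :
    ∃ e₁ e₂, Sparse q e₁ ∧ Sparse q e₂ ∧ e₁ + e₂ = z := by
  obtain ⟨A, hA, hAcard⟩ := Finset.exists_subset_card_eq (min_le_right q (blockSupp z).card)
  refine ⟨zeroV A z, zeroV Aᶜ z, ?_, ?_, zeroV_add_zeroV_compl A z⟩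
  · rw [Sparse, l0n, blockSupp_zeroV, Finset.inter_eq_left.mpr hA]
    omega
  · rw [Sparse, l0n, blockSupp_zeroV, Finset.inter_comm, ← Finset.sdiff_eq_inter_compl,
      Finset.card_sdiff_of_subset hA]
    unfold l0n at hz
    omega

end Blocks

section ErrorCorrection

variable {n p : ℕ} (Φ : Matrix (Fin p × Fin n) (Fin n) ℝ) {q : ℕ}

lemma ErrCorrectable.eq_of_l0n_sub_le (hc : ErrCorrectable Φ q) {x₁ x₂ : Fin n → ℝ}
    (h : l0n (Φ *ᵥ x₁ - Φ *ᵥ x₂) ≤ 2 * q) : x₁ = x₂ := by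
  obtain ⟨e₁, e₂, he₁, he₂, hsum⟩ := exists_sparse_add_eq h
  refine hc x₁ x₂ (-e₁) e₂ (by rwa [Sparse, l0n, blockSupp_neg]) he₂ ?_
  linear_combination (-1 : Fin p × Fin n → ℝ) * hsum

lemma ErrCorrectable.injective_zeroB (hc : ErrCorrectable Φ q) {Λ : Finset (Fin p)}
    (hΛ : Λ.card = p - 2 * q) : Function.Injective (zeroB Λ Φ).mulVec := by
  intro x₁ x₂ h
  have hzero : zeroV Λ (Φ *ᵥ x₁ - Φ *ᵥ x₂) = 0 := by
    rw [← mulVec_sub, ← zeroB_mulVec, mulVec_sub, h, sub_self]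
  have hsupp : blockSupp (Φ *ᵥ x₁ - Φ *ᵥ x₂) ⊆ Λᶜ := by
    rw [subset_compl_iff_disjoint_left, disjoint_iff_inter_eq_empty, ← blockSupp_zeroV, hzero]
    exact filter_false_of_mem fun i _ hi => hi rfl
  refine hc.eq_of_l0n_sub_le Φ ((card_le_card hsupp).trans ?_)
  rw [card_compl, Fintype.card_fin]
  omega

lemma rho_nonneg (q : ℕ) : 0 ≤ rho Φ q :=
  Real.sInf_nonneg (by rintro r ⟨Λ, -, rfl⟩; exact sigmaMin_nonneg _)

lemma rho_le_sigmaMin {Λ : Finset (Fin p)} (hΛ : Λ.card = p - q) :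
    rho Φ q ≤ sigmaMin (zeroB Λ Φ) :=
  csInf_le ⟨0, by rintro _ ⟨Λ', -, rfl⟩; exact sigmaMin_nonneg _⟩ ⟨Λ, hΛ, rfl⟩

lemma exists_rho_eq_sigmaMin (q : ℕ) :
    ∃ Λ : Finset (Fin p), Λ.card = p - q ∧ rho Φ q = sigmaMin (zeroB Λ Φ) := by
  obtain ⟨Λ₀, -, hΛ₀⟩ := Finset.exists_subset_card_eq (s := (Finset.univ : Finset (Fin p)))
    (n := p - q) (by simp)
  set T := {r | ∃ Λ : Finset (Fin p), Λ.card = p - q ∧ r = sigmaMin (zeroB Λ Φ)}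
  have hfin : T.Finite :=
    (Set.finite_range fun Λ : Finset (Fin p) => sigmaMin (zeroB Λ Φ)).subset
      (by rintro _ ⟨Λ, -, rfl⟩; exact ⟨Λ, rfl⟩)
  exact Set.Nonempty.csInf_mem (s := T) ⟨_, Λ₀, hΛ₀, rfl⟩ hfin

lemma ErrCorrectable.rho_two_mul_pos (hc : ErrCorrectable Φ q) (hn : 0 < n) :
    0 < rho Φ (2 * q) := by
  have : Nonempty (Fin n) := ⟨⟨0, hn⟩⟩
  obtain ⟨Λ, hΛ, hρ⟩ := exists_rho_eq_sigmaMin Φ (2 * q)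
  exact hρ ▸ sigmaMin_pos (hc.injective_zeroB Φ hΛ)

lemma rho_mul_eNorm2_le {Λ : Finset (Fin p)} (hΛ : Λ.card = p - q) {w : Fin n → ℝ} {B : ℝ}
    (hB : ∀ i ∈ Λ, eNorm2 (rowBlk Φ i *ᵥ w) ≤ B) :
    rho Φ q * eNorm2 w ≤ √((p - q : ℕ) : ℝ) * B :=
  calc rho Φ q * eNorm2 w ≤ sigmaMin (zeroB Λ Φ) * eNorm2 w :=
        mul_le_mul_of_nonneg_right (rho_le_sigmaMin Φ hΛ) (eNorm2_nonneg w)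
    _ ≤ eNorm2 (zeroV Λ (Φ *ᵥ w)) := zeroB_mulVec Λ Φ w ▸ sigmaMin_mul_eNorm2_le _ _
    _ ≤ √((p - q : ℕ) : ℝ) * B := hΛ ▸ eNorm2_zeroV_le hB

lemma eNorm2_rowBlk_mulVec_sub_le {x xhat : Fin n → ℝ} {e v : Fin p × Fin n → ℝ} {i : Fin p}
    (hi : blk e i = 0) :
    eNorm2 (rowBlk Φ i *ᵥ (xhat - x)) ≤
      eNorm2 (blk v i) + eNorm2 (blk (Φ *ᵥ x + e + v) i - rowBlk Φ i *ᵥ xhat) := by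
  have h : rowBlk Φ i *ᵥ (xhat - x) =
      blk v i - (blk (Φ *ᵥ x + e + v) i - rowBlk Φ i *ᵥ xhat) := by
    rw [blk_add, blk_add, hi, blk_mulVec, mulVec_sub]
    abel
  exact h ▸ eNorm2_sub_le _ _

end ErrorCorrection

end SecureEst

open SecureEst in
theorem few_large_residuals_implies_close_general {n p : ℕ}
    (Φ : Matrix (Fin p × Fin n) (Fin n) ℝ) (q r : ℕ)
    (hc : ErrCorrectable Φ q)
    (x : Fin n → ℝ) (e v : Fin p × Fin n → ℝ) (vmax : ℝ)
    (he : Sparse q e) (hv : ∀ i : Fin p, eNorm2 (blk v i) ≤ vmax)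
    (zhat : Fin p × Fin n → ℝ) (hz : zhat = Φ.mulVec x + e + v)
    (xhat : Fin n → ℝ)
    (hcount : (Finset.univ.filter fun i : Fin p =>
        theta Φ q r * vmax < eNorm2 (blk zhat i - (rowBlk Φ i).mulVec xhat)).card ≤ q) :
    eNorm2 (xhat - x) ≤ kappaC Φ q r * vmax := by
  subst hz
  set S := Finset.univ.filter fun i : Fin p =>
    theta Φ q r * vmax < eNorm2 (blk (Φ *ᵥ x + e + v) i - rowBlk Φ i *ᵥ xhat)
  obtain ⟨Λ, hΛcard, hΛ⟩ := exists_card_eq_disjoint (S ∪ blockSupp e) (m := 2 * q)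
    ((Finset.card_union_le _ _).trans (by unfold Sparse l0n at he; omega))
  rw [Fintype.card_fin] at hΛcard
  have hbound : ∀ i ∈ Λ, eNorm2 (rowBlk Φ i *ᵥ (xhat - x)) ≤ (theta Φ q r + 1) * vmax := by
    intro i hi
    have ⟨hiS, hie⟩ : i ∉ S ∧ i ∉ blockSupp e := by
      simpa only [mem_union, not_or] using disjoint_left.mp hΛ hi
    calc _ ≤ _ := eNorm2_rowBlk_mulVec_sub_le Φ (by simpa [blockSupp] using hie)
      _ ≤ vmax + theta Φ q r * vmax := add_le_add (hv i) (by simpa [S] using hiS)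
      _ = (theta Φ q r + 1) * vmax := by ring
  have hkey := rho_mul_eNorm2_le Φ hΛcard hbound
  -- `ρ = 0` forces `n = 0`; then both sides vanish, the right one since `κ^c = _ / 0 = 0`.
  rcases (rho_nonneg Φ (2 * q)).eq_or_lt with h0 | hpos
  · obtain rfl : n = 0 := by
      by_contra hn
      exact (hc.rho_two_mul_pos Φ (Nat.pos_of_ne_zero hn)).ne' h0.symm
    rw [Subsingleton.elim (xhat - x) 0, eNorm2_zero]
    simp [kappaC, ← h0]
  · rw [kappaC, div_mul_eq_mul_div, le_div_iff₀ hpos]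
    linarith

open SecureEst in
/-- Theorem 4.(i): if `xhat` satisfies
`|{i : ‖zhatᵢ − Φ_{Γᵢⁿ}xhat‖₂ > v'_max}| ≤ q` then `‖xhat − x‖₂ ≤ κ^c_{p,q,r}(Φ) v_max`. -/
theorem few_large_residuals_implies_close {n p : ℕ}
    (Φ : Matrix (Fin p × Fin n) (Fin n) ℝ) (q r : ℕ)
    (hc : ErrCorrectable Φ q) (hqr : q ≤ r) (hr2q : r ≤ 2 * q)
    (x : Fin n → ℝ) (e v : Fin p × Fin n → ℝ) (vmax : ℝ)
    (he : Sparse q e) (hv : ∀ i : Fin p, eNorm2 (blk v i) ≤ vmax)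
    (zhat : Fin p × Fin n → ℝ) (hz : zhat = Φ.mulVec x + e + v)
    (xhat : Fin n → ℝ)
    (hcount : (Finset.univ.filter fun i : Fin p =>
        theta Φ q r * vmax < eNorm2 (blk zhat i - (rowBlk Φ i).mulVec xhat)).card ≤ q) :
    eNorm2 (xhat - x) ≤ kappaC Φ q r * vmax :=
  few_large_residuals_implies_close_general Φ q r hc x e v vmax he hv zhat hz xhat hcount
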